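/- arXiv:1903.08199 — 2 statements merged into one kernel-verified Lean document; each statement's English description precedes it below -/
import Mathlib

section
/- Let f(X) = X − X Cᵀ (C X Cᵀ + V)⁻¹ C X where C is invertible and V ≻ 0. Then for every t ≥ 0, f(t·C⁻¹VC⁻ᵀ) = (t/(t+1))·C⁻¹VC⁻ᵀ, and in particular f(t·C⁻¹VC⁻ᵀ) ⪯ C⁻¹VC⁻ᵀ. -/
/-!
Write `W = C⁻¹ V C⁻ᵀ` and `f = kalmanUpdate C V`. Then `C W Cᵀ = V` and `W Cᵀ V⁻¹ C W = W`, so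
along the ray `X = t W` the matrix to invert is `C X Cᵀ + V = (t + 1) V` and the correction term
collapses to `t² / (t + 1) • W`. Hence `W - f (t W) = (t + 1)⁻¹ • W`, a nonnegative multiple of
the congruence `C⁻¹ V C⁻ᵀ` of the positive definite `V`.
-/

open Matrix

namespace Matrix

variable {ι : Type*} [Fintype ι] [DecidableEq ι]

section CommRing

variable {R : Type*} [CommRing R] {C V : Matrix ι ι R}

theorem inv_mul_mul_inv_transpose_mul_transpose (hC : IsUnit C.det) :
    C⁻¹ * V * (Cᵀ)⁻¹ * Cᵀ = C⁻¹ * V :=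
  nonsing_inv_mul_cancel_right _ _ (isUnit_det_transpose C hC)

theorem mul_inv_mul_mul_inv_transpose_mul_transpose (hC : IsUnit C.det) :
    C * (C⁻¹ * V * (Cᵀ)⁻¹) * Cᵀ = V := by
  rw [Matrix.mul_assoc, inv_mul_mul_inv_transpose_mul_transpose hC,
    mul_nonsing_inv_cancel_left _ _ hC]

theorem inv_mul_mul_inv_transpose_mul_inv_mul (hC : IsUnit C.det) (hV : IsUnit V.det) :
    C⁻¹ * V * (Cᵀ)⁻¹ * Cᵀ * V⁻¹ * C * (C⁻¹ * V * (Cᵀ)⁻¹) = C⁻¹ * V * (Cᵀ)⁻¹ := by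
  rw [inv_mul_mul_inv_transpose_mul_transpose hC, mul_nonsing_inv_cancel_right _ _ hV,
    nonsing_inv_mul C hC, Matrix.one_mul]

end CommRing

variable {K : Type*} [Field K]

noncomputable def kalmanUpdate (C V X : Matrix ι ι K) : Matrix ι ι K :=
  X - X * Cᵀ * (C * X * Cᵀ + V)⁻¹ * C * X

variable {C V : Matrix ι ι K}

theorem kalmanUpdate_smul_inv_mul_mul_inv_transpose (hC : IsUnit C.det) (hV : IsUnit V.det)
    {t : K} (ht : t + 1 ≠ 0) :
    kalmanUpdate C V (t • (C⁻¹ * V * (Cᵀ)⁻¹)) = (t / (t + 1)) • (C⁻¹ * V * (Cᵀ)⁻¹) := by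
  have hS : C * (t • (C⁻¹ * V * (Cᵀ)⁻¹)) * Cᵀ + V = (t + 1) • V := by
    rw [Matrix.mul_smul, Matrix.smul_mul, mul_inv_mul_mul_inv_transpose_mul_transpose hC,
      add_smul, one_smul]
  have hSinv : ((t + 1) • V)⁻¹ = (t + 1)⁻¹ • V⁻¹ := inv_smul' _ (Units.mk0 _ ht) hV
  rw [kalmanUpdate, hS, hSinv]
  simp only [Matrix.smul_mul, Matrix.mul_smul, smul_smul,
    inv_mul_mul_inv_transpose_mul_inv_mul hC hV, ← sub_smul]
  congr 1
  field_simp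
  ring

end Matrix

theorem stmt_5 (n : ℕ) (C V : Matrix (Fin n) (Fin n) ℝ)
    (hC : IsUnit C.det) (hV : V.PosDef) (t : ℝ) (ht : 0 ≤ t) :
    (t • (C⁻¹ * V * (Cᵀ)⁻¹)
        - (t • (C⁻¹ * V * (Cᵀ)⁻¹)) * Cᵀ * (C * (t • (C⁻¹ * V * (Cᵀ)⁻¹)) * Cᵀ + V)⁻¹
            * C * (t • (C⁻¹ * V * (Cᵀ)⁻¹))
      = (t / (t + 1)) • (C⁻¹ * V * (Cᵀ)⁻¹)) ∧
    ((C⁻¹ * V * (Cᵀ)⁻¹)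
        - (t • (C⁻¹ * V * (Cᵀ)⁻¹)
            - (t • (C⁻¹ * V * (Cᵀ)⁻¹)) * Cᵀ * (C * (t • (C⁻¹ * V * (Cᵀ)⁻¹)) * Cᵀ + V)⁻¹
                * C * (t • (C⁻¹ * V * (Cᵀ)⁻¹)))).PosSemidef := by
  have ht1 : 0 < t + 1 := by linarith
  have hf := kalmanUpdate_smul_inv_mul_mul_inv_transpose hC
    ((isUnit_iff_isUnit_det V).mp hV.isUnit) ht1.ne'
  rw [kalmanUpdate] at hf
  refine ⟨hf, ?_⟩
  have hW : (C⁻¹ * V * (Cᵀ)⁻¹).PosSemidef := by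
    simpa [transpose_nonsing_inv] using hV.posSemidef.mul_mul_conjTranspose_same C⁻¹
  have hrest : C⁻¹ * V * (Cᵀ)⁻¹ - (t / (t + 1)) • (C⁻¹ * V * (Cᵀ)⁻¹)
      = (t + 1)⁻¹ • (C⁻¹ * V * (Cᵀ)⁻¹) := by
    have hcoef : 1 - t / (t + 1) = (t + 1)⁻¹ := by field_simp; ring
    rw [← hcoef, sub_smul, one_smul]
  rw [hf, hrest]
  exact hW.smul (inv_nonneg.mpr ht1.le)
end

section
/- Let H be an n×n real matrix and Σ, W, M symmetric positive definite n×n matrices satisfying Σ = H(Σ⁻¹ + M)⁻¹Hᵀ + W. If Σ ⪰ W, then tr(Σ) − tr(W) ≥ tr(HᵀH)·λ_min(W) / (1 + λ_min(W)·λ_max(M)). -/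
/-!
In the Loewner order, `λ_min(W) • 1 ≤ W ≤ Σ` gives `Σ⁻¹ ≤ λ_min(W)⁻¹ • 1`, and `M ≤ λ_max(M) • 1`,
so `Σ⁻¹ + M ≤ k • 1` with `k = λ_min(W)⁻¹ + λ_max(M)`. Inverting, `k⁻¹ • 1 ≤ (Σ⁻¹ + M)⁻¹`;
conjugating by `H` and taking traces in the Riccati identity gives
`tr Σ - tr W = tr (H (Σ⁻¹ + M)⁻¹ Hᵀ) ≥ k⁻¹ tr (H Hᵀ)`, and `k⁻¹ = λ_min(W) / (1 + λ_min(W) λ_max(M))`.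
-/

open Matrix
open scoped MatrixOrder ComplexOrder

namespace Matrix

variable {m n 𝕜 : Type*} [Fintype m] [Fintype n] [DecidableEq n] [RCLike 𝕜]

lemma IsHermitian.smul_one_le_iff {A : Matrix n n 𝕜} (hA : A.IsHermitian) {c : ℝ} :
    c • (1 : Matrix n n 𝕜) ≤ A ↔ ∀ i, c ≤ hA.eigenvalues i := by
  rw [← Algebra.algebraMap_eq_smul_one, algebraMap_le_iff_le_spectrum hA.isSelfAdjoint,
    hA.spectrum_real_eq_range_eigenvalues, Set.forall_mem_range]

lemma IsHermitian.le_smul_one_iff {A : Matrix n n 𝕜} (hA : A.IsHermitian) {c : ℝ} :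
    A ≤ c • (1 : Matrix n n 𝕜) ↔ ∀ i, hA.eigenvalues i ≤ c := by
  rw [← Algebra.algebraMap_eq_smul_one, le_algebraMap_iff_spectrum_le hA.isSelfAdjoint,
    hA.spectrum_real_eq_range_eigenvalues, Set.forall_mem_range]

lemma IsHermitian.iInf_eigenvalues_smul_one_le {A : Matrix n n 𝕜} (hA : A.IsHermitian) :
    (⨅ i, hA.eigenvalues i) • (1 : Matrix n n 𝕜) ≤ A :=
  hA.smul_one_le_iff.mpr fun i ↦ ciInf_le (Set.finite_range _).bddBelow i

lemma IsHermitian.le_iSup_eigenvalues_smul_one {A : Matrix n n 𝕜} (hA : A.IsHermitian) :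
    A ≤ (⨆ i, hA.eigenvalues i) • (1 : Matrix n n 𝕜) :=
  hA.le_smul_one_iff.mpr fun i ↦ le_ciSup (Set.finite_range _).bddAbove i

lemma PosDef.iInf_eigenvalues_pos [Nonempty n] {A : Matrix n n 𝕜} (hA : A.PosDef) :
    0 < ⨅ i, hA.isHermitian.eigenvalues i := by
  obtain ⟨i, hi⟩ := exists_eq_ciInf_of_finite (f := hA.isHermitian.eigenvalues)
  exact hi ▸ hA.eigenvalues_pos i

lemma PosSemidef.iSup_eigenvalues_nonneg [Nonempty n] {A : Matrix n n 𝕜} (hA : A.PosSemidef) :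
    0 ≤ ⨆ i, hA.isHermitian.eigenvalues i :=
  le_ciSup_of_le (Set.finite_range _).bddAbove (Classical.arbitrary _) (hA.eigenvalues_nonneg _)

lemma PosDef.spectrum_real_inv {A : Matrix n n 𝕜} (hA : A.PosDef) :
    spectrum ℝ A⁻¹ = Set.range fun i ↦ (hA.isHermitian.eigenvalues i)⁻¹ := by
  lift A to (Matrix n n 𝕜)ˣ using hA.isUnit
  rw [← coe_units_inv, ← spectrum.map_inv, hA.isHermitian.spectrum_real_eq_range_eigenvalues,
    Set.inv_range]

lemma PosDef.inv_smul_one_le_inv {A : Matrix n n 𝕜} (hA : A.PosDef) {c : ℝ}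
    (h : A ≤ c • 1) : c⁻¹ • (1 : Matrix n n 𝕜) ≤ A⁻¹ := by
  rw [← Algebra.algebraMap_eq_smul_one,
    algebraMap_le_iff_le_spectrum hA.inv.isHermitian.isSelfAdjoint, hA.spectrum_real_inv,
    Set.forall_mem_range]
  exact fun i ↦ inv_anti₀ (hA.eigenvalues_pos i) (hA.isHermitian.le_smul_one_iff.mp h i)

lemma PosDef.inv_le_inv_smul_one {A : Matrix n n 𝕜} (hA : A.PosDef) {c : ℝ} (hc : 0 < c)
    (h : c • 1 ≤ A) : A⁻¹ ≤ c⁻¹ • (1 : Matrix n n 𝕜) := by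
  rw [← Algebra.algebraMap_eq_smul_one,
    le_algebraMap_iff_spectrum_le hA.inv.isHermitian.isSelfAdjoint, hA.spectrum_real_inv,
    Set.forall_mem_range]
  exact fun i ↦ inv_anti₀ hc (hA.isHermitian.smul_one_le_iff.mp h i)

lemma mul_trace_mul_conjTranspose_le {X : Matrix n n 𝕜} {c : ℝ} (h : c • 1 ≤ X)
    (H : Matrix m n 𝕜) : (c : 𝕜) * (H * Hᴴ).trace ≤ (H * X * Hᴴ).trace := by
  have htr := ((le_iff.mp h).mul_mul_conjTranspose_same H).trace_nonneg
  rwa [Matrix.mul_sub, Matrix.sub_mul, trace_sub, Matrix.mul_smul, Matrix.mul_one, Matrix.smul_mul,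
    trace_smul, sub_nonneg, RCLike.real_smul_eq_coe_mul] at htr

end Matrix

theorem stmt_9 (n : ℕ) (hn : 0 < n) (H Sig W M : Matrix (Fin n) (Fin n) ℝ)
    (hSig : Sig.PosDef) (hW : W.PosDef) (hM : M.IsHermitian) (hMpsd : M.PosSemidef)
    (hRic : Sig = H * (Sig⁻¹ + M)⁻¹ * Hᵀ + W) (hSW : (Sig - W).PosSemidef) :
    (Hᵀ * H).trace * (⨅ i, hW.1.eigenvalues i)
        / (1 + (⨅ i, hW.1.eigenvalues i) * ⨆ i, hM.eigenvalues i)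
      ≤ Sig.trace - W.trace := by
  have : Nonempty (Fin n) := ⟨⟨0, hn⟩⟩
  set a := ⨅ i, hW.1.eigenvalues i
  set b := ⨆ i, hM.eigenvalues i
  have ha : 0 < a := hW.iInf_eigenvalues_pos
  have hb : 0 ≤ b := hMpsd.iSup_eigenvalues_nonneg
  have hSig_inv : Sig⁻¹ ≤ a⁻¹ • 1 :=
    hSig.inv_le_inv_smul_one ha (hW.1.iInf_eigenvalues_smul_one_le.trans (le_iff.mpr hSW))
  have hgain : (a⁻¹ + b)⁻¹ • 1 ≤ (Sig⁻¹ + M)⁻¹ := by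
    refine (hSig.inv.add_posSemidef hMpsd).inv_smul_one_le_inv ?_
    rw [add_smul]
    exact add_le_add hSig_inv hM.le_iSup_eigenvalues_smul_one
  have htr := mul_trace_mul_conjTranspose_le hgain H
  rw [conjTranspose_eq_transpose_of_trivial] at htr
  have hdiff : Sig.trace - W.trace = (H * (Sig⁻¹ + M)⁻¹ * Hᵀ).trace := by
    conv_lhs => rw [hRic, trace_add]
    ring
  have hk : a / (1 + a * b) = (a⁻¹ + b)⁻¹ := by field_simp
  rw [hdiff, mul_div_assoc, hk, trace_mul_comm, mul_comm]
  exact htr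
end
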